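/- Let G be a graph without isolated vertices and H a dilation of G in which every hyperedge contains at least one additional vertex. Then γ(H) = ν(H) if and only if G is a König–Egerváry graph, i.e., τ(G) = ν(G). -/

import Mathlib

open Finset

/-- Two vertices of a hypergraph (given by its finite set of hyperedges) are
adjacent if they are distinct and lie in a common hyperedge. -/
def HypAdj {W : Type*} (E : Finset (Finset W)) (u v : W) : Prop :=
  u ≠ v ∧ ∃ e ∈ E, u ∈ e ∧ v ∈ e

/-- A matching of a hypergraph: a set of pairwise disjoint hyperedges. -/
def IsHypMatching {W : Type*} (E M : Finset (Finset W)) : Prop :=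
  M ⊆ E ∧ ∀ a ∈ M, ∀ b ∈ M, a ≠ b → Disjoint a b

/-- Matching number of a hypergraph. -/
noncomputable def nuH {W : Type*} (E : Finset (Finset W)) : ℕ :=
  sSup {n | ∃ M : Finset (Finset W), IsHypMatching E M ∧ M.card = n}

/-- A transversal (vertex cover) of a hypergraph: meets every hyperedge. -/
def IsTransversal {W : Type*} (E : Finset (Finset W)) (T : Finset W) : Prop :=
  ∀ e ∈ E, ∃ w ∈ T, w ∈ e

/-- Transversal number of a hypergraph. -/
noncomputable def tauH {W : Type*} (E : Finset (Finset W)) : ℕ :=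
  sInf {n | ∃ T : Finset W, IsTransversal E T ∧ T.card = n}

/-- A dominating set of a hypergraph: every vertex outside it is adjacent
(shares a hyperedge) with some vertex inside it. -/
def IsDominatingH {W : Type*} (E : Finset (Finset W)) (D : Finset W) : Prop :=
  ∀ v, v ∉ D → ∃ u ∈ D, HypAdj E u v

/-- Domination number of a hypergraph on the (finite) vertex type `W`. -/
noncomputable def gammaH {W : Type*} (E : Finset (Finset W)) : ℕ :=
  sInf {n | ∃ D : Finset W, IsDominatingH E D ∧ D.card = n}

/-- The two-element finset associated to an unordered pair. -/
noncomputable def sym2ToFinset {V : Type*} (e : Sym2 V) : Finset V := by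
  classical exact Sym2.lift ⟨fun a b => ({a, b} : Finset V), fun a b => Finset.pair_comm a b⟩ e

/-- The edges of a simple graph, viewed as the hyperedges (of size two)
of a 2-uniform hypergraph. -/
noncomputable def graphEdges {V : Type*} [Fintype V] (G : SimpleGraph V) :
    Finset (Finset V) := by
  classical exact ((Finset.univ : Finset (Sym2 V)).filter (· ∈ G.edgeSet)).image sym2ToFinset

/-- A dominating set of a simple graph. -/
def IsDominatingG {V : Type*} (G : SimpleGraph V) (D : Finset V) : Prop :=
  ∀ v, v ∉ D → ∃ u ∈ D, G.Adj u v

/-- Domination number of a simple graph. -/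
noncomputable def gammaG {V : Type*} [Fintype V] (G : SimpleGraph V) : ℕ :=
  sInf {n | ∃ D : Finset V, IsDominatingG G D ∧ D.card = n}

/-- A Berge-`G` hypergraph on vertex type `W`: an injection `i` of the vertices
of `G` and a bijection `f` from the edges of `G` to the hyperedges `EH`,
such that each edge of `G` is embedded in the corresponding hyperedge. -/
structure BergeG {V : Type*} (G : SimpleGraph V) (W : Type*) where
  EH : Finset (Finset W)
  i : V ↪ W
  f : Sym2 V → Finset W
  f_mem : ∀ ⦃e⦄, e ∈ G.edgeSet → f e ∈ EH
  f_inj : ∀ ⦃e e'⦄, e ∈ G.edgeSet → e' ∈ G.edgeSet → f e = f e' → e = e'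
  f_surj : ∀ h ∈ EH, ∃ e ∈ G.edgeSet, f e = h
  contains : ∀ ⦃u v⦄, G.Adj u v → i u ∈ f s(u, v) ∧ i v ∈ f s(u, v)

/-- A dilation of a simple graph `G`, on the vertex type `W`: each vertex `v` of `G`
is blown up to a finset `vset v` containing the support vertex `supp v`, each edge `e`
of `G` gets a (possibly empty) finset `eset e` of additional vertices, all these finsets
being pairwise disjoint and covering `W`; the hyperedge corresponding to the edge
`e = {u,v}` is `vset u ∪ vset v ∪ eset e`, and all hyperedges have size at most the
rank `k ≥ 3`. -/
structure GraphDilation {V : Type*} (G : SimpleGraph V) (W : Type*) where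
  vset : V → Finset W
  supp : V → W
  eset : Sym2 V → Finset W
  k : ℕ
  k_ge : 3 ≤ k
  supp_mem : ∀ v, supp v ∈ vset v
  vset_disj : ∀ ⦃u v : V⦄, u ≠ v → Disjoint (vset u) (vset v)
  eset_disj : ∀ ⦃e f : Sym2 V⦄, e ∈ G.edgeSet → f ∈ G.edgeSet → e ≠ f →
    Disjoint (eset e) (eset f)
  vset_eset_disj : ∀ (v : V), ∀ ⦃e : Sym2 V⦄, e ∈ G.edgeSet → Disjoint (vset v) (eset e)
  card_le : ∀ ⦃u v : V⦄, G.Adj u v →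
    (vset u).card + (vset v).card + (eset s(u, v)).card ≤ k
  cover : ∀ w : W, (∃ v : V, w ∈ vset v) ∨ (∃ e ∈ G.edgeSet, w ∈ eset e)

/-- The hyperedge of a dilation corresponding to an edge `e` of the support graph. -/
noncomputable def GraphDilation.hedge {V W : Type*} {G : SimpleGraph V} (D : GraphDilation G W)
    (e : Sym2 V) : Finset W := by
  classical exact (sym2ToFinset e).biUnion D.vset ∪ D.eset e

/-- The hyperedge set of a dilation. -/
noncomputable def GraphDilation.edges {V W : Type*} [Fintype V] {G : SimpleGraph V}
    (D : GraphDilation G W) : Finset (Finset W) := by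
  classical exact ((Finset.univ : Finset (Sym2 V)).filter (· ∈ G.edgeSet)).image D.hedge

/-! In a hypergraph without isolated vertices in which every hyperedge has a private vertex,
dominating sets and transversals coincide: a private vertex outside a dominating set is dominated
from inside its unique hyperedge. The additional vertices of a dilation are such private vertices,
so γ(H) = τ(H). Covers transfer between G and H along `v ↦ supp v` and along a projection of the
vertices of H onto those of G, so τ(H) = τ(G); and `e ↦ 𝐯ᵢ ∪ 𝐯ⱼ ∪ 𝐞` is injective and preserves
and reflects disjointness on the edges of G, so ν(H) = ν(G). -/

theorem Nat.sInf_eq_sInf_of_forall_exists_le {A B : Set ℕ} (hAB : ∀ a ∈ A, ∃ b ∈ B, b ≤ a)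
    (hBA : ∀ b ∈ B, ∃ a ∈ A, a ≤ b) : sInf A = sInf B := by
  have key : ∀ {A B : Set ℕ}, (∀ b ∈ B, ∃ a ∈ A, a ≤ b) → B.Nonempty → sInf A ≤ sInf B :=
    fun h hB => by
      obtain ⟨a, ha, hle⟩ := h _ (Nat.sInf_mem hB)
      exact (Nat.sInf_le ha).trans hle
  rcases A.eq_empty_or_nonempty with rfl | hA
  · obtain rfl : B = ∅ := Set.eq_empty_of_forall_notMem fun b hb => by simpa using hBA b hb
    rfl
  · obtain ⟨b, hb, -⟩ := hAB _ (Nat.sInf_mem hA)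
    exact le_antisymm (key hBA ⟨b, hb⟩) (key hAB hA)

section Hypergraph

variable {X : Type*} {E : Finset (Finset X)}

theorem isDominatingH_of_isTransversal (hcover : ∀ x, ∃ e ∈ E, x ∈ e) {T : Finset X}
    (hT : IsTransversal E T) : IsDominatingH E T := by
  intro x hx
  obtain ⟨e, he, hxe⟩ := hcover x
  obtain ⟨t, htT, hte⟩ := hT e he
  exact ⟨t, htT, fun htx => hx (htx ▸ htT), e, he, hte, hxe⟩

theorem isTransversal_of_isDominatingH
    (hprivate : ∀ e ∈ E, ∃ x ∈ e, ∀ f ∈ E, x ∈ f → f = e) {D : Finset X}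
    (hD : IsDominatingH E D) : IsTransversal E D := by
  intro e he
  obtain ⟨x, hxe, hx⟩ := hprivate e he
  by_cases hxD : x ∈ D
  · exact ⟨x, hxD, hxe⟩
  · obtain ⟨u, huD, -, f, hf, huf, hxf⟩ := hD x hxD
    exact ⟨u, huD, hx f hf hxf ▸ huf⟩

theorem gammaH_eq_tauH (hcover : ∀ x, ∃ e ∈ E, x ∈ e)
    (hprivate : ∀ e ∈ E, ∃ x ∈ e, ∀ f ∈ E, x ∈ f → f = e) : gammaH E = tauH E := by
  have hiff : ∀ T, IsDominatingH E T ↔ IsTransversal E T := fun _ =>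
    ⟨isTransversal_of_isDominatingH hprivate, isDominatingH_of_isTransversal hcover⟩
  simp only [gammaH, tauH, hiff]

theorem nuH_image {α : Type*} [DecidableEq (Finset X)] (S : Finset α) {g : α → Finset X}
    (hg : Set.InjOn g S) :
    nuH (S.image g) =
      sSup {n | ∃ F ⊆ S, (F : Set α).Pairwise (fun a b => Disjoint (g a) (g b)) ∧ F.card = n} := by
  unfold nuH
  congr 1
  ext n
  constructor
  · rintro ⟨M, ⟨hMS, hdisj⟩, rfl⟩
    obtain ⟨F, hFS, rfl⟩ := Finset.subset_image_iff.mp hMS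
    refine ⟨F, hFS, fun a ha b hb hab => ?_, (card_image_of_injOn (hg.mono hFS)).symm⟩
    exact hdisj _ (mem_image_of_mem g ha) _ (mem_image_of_mem g hb) (hg.ne (hFS ha) (hFS hb) hab)
  · rintro ⟨F, hFS, hdisj, rfl⟩
    refine ⟨F.image g, ⟨image_subset_image hFS, ?_⟩, card_image_of_injOn (hg.mono hFS)⟩
    simp only [mem_image]
    rintro _ ⟨a, ha, rfl⟩ _ ⟨b, hb, rfl⟩ hab
    exact hdisj ha hb (fun h => hab (h ▸ rfl))

end Hypergraph

section Graph

variable {V : Type*}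

theorem mem_sym2ToFinset {x : V} {e : Sym2 V} : x ∈ sym2ToFinset e ↔ x ∈ e := by
  induction e using Sym2.inductionOn with
  | hf a b => simp [sym2ToFinset, Sym2.mem_iff]

theorem sym2ToFinset_injective : Function.Injective (sym2ToFinset (V := V)) := fun e f h =>
  Sym2.ext fun x => by rw [← mem_sym2ToFinset, ← mem_sym2ToFinset, h]

theorem mem_graphEdges [Fintype V] {G : SimpleGraph V} {h : Finset V} :
    h ∈ graphEdges G ↔ ∃ e ∈ G.edgeSet, sym2ToFinset e = h := by
  classical
  simp [graphEdges]

end Graph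

namespace GraphDilation

variable {V W : Type*} {G : SimpleGraph V} (D : GraphDilation G W)

theorem mem_hedge {w : W} {e : Sym2 V} :
    w ∈ D.hedge e ↔ (∃ x ∈ e, w ∈ D.vset x) ∨ w ∈ D.eset e := by
  classical
  simp [hedge, mem_sym2ToFinset]

theorem vset_subset_hedge {x : V} {e : Sym2 V} (hx : x ∈ e) : D.vset x ⊆ D.hedge e :=
  fun _ hw => D.mem_hedge.mpr (Or.inl ⟨x, hx, hw⟩)

theorem eset_subset_hedge (e : Sym2 V) : D.eset e ⊆ D.hedge e :=
  fun _ hw => D.mem_hedge.mpr (Or.inr hw)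

theorem mem_edges [Fintype V] {h : Finset W} :
    h ∈ D.edges ↔ ∃ e ∈ G.edgeSet, D.hedge e = h := by
  classical
  simp [edges]

theorem eq_of_mem_eset_of_mem_hedge {w : W} {e f : Sym2 V} (he : e ∈ G.edgeSet)
    (hf : f ∈ G.edgeSet) (hwe : w ∈ D.eset e) (hwf : w ∈ D.hedge f) : f = e := by
  rcases D.mem_hedge.mp hwf with ⟨x, -, hwx⟩ | hwf
  · exact absurd hwe (disjoint_left.mp (D.vset_eset_disj x he) hwx)
  · by_contra hne
    exact disjoint_left.mp (D.eset_disj he hf (Ne.symm hne)) hwe hwf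

theorem hedge_injOn (hadd : ∀ e ∈ G.edgeSet, (D.eset e).Nonempty) :
    Set.InjOn D.hedge G.edgeSet := fun e he f hf h => by
  obtain ⟨w, hw⟩ := hadd e he
  exact (D.eq_of_mem_eset_of_mem_hedge he hf hw (h ▸ D.eset_subset_hedge e hw)).symm

theorem disjoint_hedge_iff {e f : Sym2 V} (he : e ∈ G.edgeSet) (hf : f ∈ G.edgeSet)
    (hne : e ≠ f) :
    Disjoint (D.hedge e) (D.hedge f) ↔ Disjoint (sym2ToFinset e) (sym2ToFinset f) := by
  simp only [disjoint_left, mem_sym2ToFinset]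
  constructor
  · intro hd x hxe hxf
    exact hd (D.vset_subset_hedge hxe (D.supp_mem x)) (D.vset_subset_hedge hxf (D.supp_mem x))
  · intro hd w hwe hwf
    rcases D.mem_hedge.mp hwe with ⟨x, hxe, hwx⟩ | hwe <;>
      rcases D.mem_hedge.mp hwf with ⟨y, hyf, hwy⟩ | hwf
    · obtain rfl : x = y := by
        by_contra hxy
        exact disjoint_left.mp (D.vset_disj hxy) hwx hwy
      exact hd hxe hyf
    · exact disjoint_left.mp (D.vset_eset_disj x hf) hwx hwf
    · exact disjoint_left.mp (D.vset_eset_disj y he) hwy hwe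
    · exact disjoint_left.mp (D.eset_disj he hf hne) hwe hwf

theorem exists_proj (w : W) :
    ∃ v, w ∈ D.vset v ∨ ∃ e ∈ G.edgeSet, v ∈ e ∧ w ∈ D.eset e := by
  rcases D.cover w with ⟨v, hv⟩ | ⟨e, he, hwe⟩
  · exact ⟨v, Or.inl hv⟩
  · exact ⟨(Quot.out e).1, Or.inr ⟨e, he, Sym2.out_fst_mem e, hwe⟩⟩

/-- The vertex of `G` that a vertex of the dilation is blown up from, or an endpoint of the
edge it is added to. -/
noncomputable def proj (w : W) : V := (D.exists_proj w).choose

theorem proj_mem_of_mem_hedge {w : W} {e : Sym2 V} (he : e ∈ G.edgeSet) (hw : w ∈ D.hedge e) :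
    D.proj w ∈ e := by
  rcases (D.exists_proj w).choose_spec with hwv | ⟨f, hf, hvf, hwf⟩
  · rcases D.mem_hedge.mp hw with ⟨x, hxe, hwx⟩ | hwe
    · obtain rfl : x = D.proj w := by
        by_contra hne
        exact disjoint_left.mp (D.vset_disj hne) hwx hwv
      exact hxe
    · exact absurd hwe (disjoint_left.mp (D.vset_eset_disj _ he) hwv)
  · rwa [← D.eq_of_mem_eset_of_mem_hedge hf he hwf hw] at hvf

variable [Fintype V]

theorem isTransversal_image_supp [DecidableEq W] {T : Finset V}
    (hT : IsTransversal (graphEdges G) T) : IsTransversal D.edges (T.image D.supp) := by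
  intro h hh
  obtain ⟨e, he, rfl⟩ := D.mem_edges.mp hh
  obtain ⟨t, htT, hte⟩ := hT _ (mem_graphEdges.mpr ⟨e, he, rfl⟩)
  exact ⟨D.supp t, mem_image_of_mem _ htT,
    D.vset_subset_hedge (mem_sym2ToFinset.mp hte) (D.supp_mem t)⟩

theorem isTransversal_image_proj [DecidableEq V] {T : Finset W}
    (hT : IsTransversal D.edges T) : IsTransversal (graphEdges G) (T.image D.proj) := by
  intro h hh
  obtain ⟨e, he, rfl⟩ := mem_graphEdges.mp hh
  obtain ⟨w, hwT, hwe⟩ := hT _ (D.mem_edges.mpr ⟨e, he, rfl⟩)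
  exact ⟨D.proj w, mem_image_of_mem _ hwT, mem_sym2ToFinset.mpr (D.proj_mem_of_mem_hedge he hwe)⟩

theorem tauH_edges : tauH D.edges = tauH (graphEdges G) := by
  classical
  apply Nat.sInf_eq_sInf_of_forall_exists_le <;> rintro _ ⟨T, hT, rfl⟩
  · exact ⟨_, ⟨_, D.isTransversal_image_proj hT, rfl⟩, card_image_le⟩
  · exact ⟨_, ⟨_, D.isTransversal_image_supp hT, rfl⟩, card_image_le⟩

theorem nuH_edges (hadd : ∀ e ∈ G.edgeSet, (D.eset e).Nonempty) :
    nuH D.edges = nuH (graphEdges G) := by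
  classical
  have hS : ∀ e ∈ univ.filter (· ∈ G.edgeSet), e ∈ G.edgeSet := fun e he => (mem_filter.mp he).2
  rw [edges, graphEdges, nuH_image _ ((D.hedge_injOn hadd).mono hS),
    nuH_image _ sym2ToFinset_injective.injOn]
  congr 1
  ext n
  refine exists_congr fun F => and_congr_right fun hF => and_congr_left fun _ => ?_
  refine forall₂_congr fun e he => forall₂_congr fun f hf => forall_congr' fun hne => ?_
  exact D.disjoint_hedge_iff (hS e (hF he)) (hS f (hF hf)) hne

theorem exists_mem_edges (hiso : ∀ v : V, ∃ u : V, G.Adj v u) (w : W) :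
    ∃ h ∈ D.edges, w ∈ h := by
  rcases D.cover w with ⟨v, hwv⟩ | ⟨e, he, hwe⟩
  · obtain ⟨u, hvu⟩ := hiso v
    exact ⟨_, D.mem_edges.mpr ⟨_, hvu, rfl⟩, D.vset_subset_hedge (Sym2.mem_mk_left v u) hwv⟩
  · exact ⟨_, D.mem_edges.mpr ⟨e, he, rfl⟩, D.eset_subset_hedge e hwe⟩

theorem exists_private_mem (hadd : ∀ e ∈ G.edgeSet, (D.eset e).Nonempty) :
    ∀ h ∈ D.edges, ∃ w ∈ h, ∀ h' ∈ D.edges, w ∈ h' → h' = h := by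
  rintro _ hh
  obtain ⟨e, he, rfl⟩ := D.mem_edges.mp hh
  obtain ⟨w, hw⟩ := hadd e he
  refine ⟨w, D.eset_subset_hedge e hw, fun _ hh' hwh' => ?_⟩
  obtain ⟨f, hf, rfl⟩ := D.mem_edges.mp hh'
  rw [D.eq_of_mem_eset_of_mem_hedge he hf hw hwh']

end GraphDilation

theorem dilation_gamma_eq_nu_iff_koenig {V W : Type*} [Fintype V] (G : SimpleGraph V)
    (hiso : ∀ v : V, ∃ u : V, G.Adj v u)
    (D : GraphDilation G W) (hadd : ∀ e ∈ G.edgeSet, (D.eset e).Nonempty) :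
    gammaH D.edges = nuH D.edges ↔ tauH (graphEdges G) = nuH (graphEdges G) := by
  rw [gammaH_eq_tauH (D.exists_mem_edges hiso) (D.exists_private_mem hadd), D.tauH_edges,
    D.nuH_edges hadd]
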